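/- arXiv:0906.1692 — 3 statements merged into one kernel-verified Lean document; each statement's English description precedes it below -/
import Mathlib

section
/- Let 𝔤 be a finite-dimensional real semisimple Lie algebra and (𝔭, 𝔮) a complementary pair of height-one parabolic subalgebras of 𝔤. Then there exists a unique element ξ ∈ 𝔤 (the grading element of the pair) such that ⁅ξ, x⁆ = −x for all x ∈ 𝔭^⊥, ⁅ξ, x⁆ = 0 for all x ∈ 𝔭 ∩ 𝔮, and ⁅ξ, x⁆ = x for all x ∈ 𝔮^⊥; moreover ξ lies in the centre of the Lie subalgebra 𝔭 ∩ 𝔮. -/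
open LieAlgebra Module

variable {L : Type*} [LieRing L] [LieAlgebra ℝ L]

/-- The Killing polar `𝔭^⊥` of a Lie subalgebra. -/
def killingPolar (p : LieSubalgebra ℝ L) : Submodule ℝ L where
  carrier := {x | ∀ y ∈ p, killingForm ℝ L x y = 0}
  add_mem' := fun ha hb => fun y hy => by simp [ha y hy, hb y hy]
  zero_mem' := fun y hy => by simp
  smul_mem' := fun c a ha => fun y hy => by simp [ha y hy]

/-- A height-one parabolic subalgebra: the Killing polar is an abelian
(hence nilpotent) subalgebra. -/
def IsH1Parabolic (p : LieSubalgebra ℝ L) : Prop :=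
  ∀ x ∈ killingPolar p, ∀ y ∈ killingPolar p, ⁅x, y⁆ = (0 : L)

/-- Complementary pair of height-one parabolic subalgebras:
`𝔤 = 𝔭 ⊕ 𝔮^⊥` and `𝔤 = 𝔮 ⊕ 𝔭^⊥` as direct sums of subspaces. -/
def ComplPair (p q : LieSubalgebra ℝ L) : Prop :=
  IsCompl p.toSubmodule (killingPolar q) ∧ IsCompl q.toSubmodule (killingPolar p)

/-!
The Killing form is nondegenerate, so `𝔭` is the Killing polar of `𝔭^⊥`. Since `𝔭^⊥` is abelian,
invariance of the Killing form gives `⁅𝔭^⊥, 𝔤⁆ ⊆ 𝔭`, and then `𝔭^⊥ ⊆ 𝔭` because `ad x ∘ ad y` is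
nilpotent for `x, y ∈ 𝔭^⊥`. Hence `𝔤 = 𝔭^⊥ ⊕ (𝔭 ∩ 𝔮) ⊕ 𝔮^⊥` is a Lie algebra grading in degrees
`-1, 0, 1`, and the linear map multiplying each piece by its degree is a derivation. Derivations
of a semisimple Lie algebra are inner, which produces `ξ`; it is unique because `ad` is injective,
and it lies in `𝔭 ∩ 𝔮`, the kernel of the degree map, because `⁅ξ, ξ⁆ = 0`.
-/

theorem Module.End.leibniz_of_weights {R 𝔤 ι : Type*} [CommRing R] [LieRing 𝔤] [LieAlgebra R 𝔤]
    {V : ι → Submodule R 𝔤} (hV : ⨆ i, V i = ⊤) {c : ι → R} {D : Module.End R 𝔤}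
    (hD : ∀ i, ∀ x ∈ V i, D x = c i • x)
    (hbr : ∀ i j, ∀ x ∈ V i, ∀ y ∈ V j, D ⁅x, y⁆ = (c i + c j) • ⁅x, y⁆) (a b : 𝔤) :
    D ⁅a, b⁆ = ⁅a, D b⁆ - ⁅b, D a⁆ := by
  have hmem : ∀ z : 𝔤, z ∈ ⨆ i, V i := fun z => hV ▸ Submodule.mem_top
  refine Submodule.iSup_induction V (motive := fun a => D ⁅a, b⁆ = ⁅a, D b⁆ - ⁅b, D a⁆)
    (hmem a) (fun i x hx => ?_) (by simp) fun a₁ a₂ h₁ h₂ => ?_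
  · refine Submodule.iSup_induction V (motive := fun b => D ⁅x, b⁆ = ⁅x, D b⁆ - ⁅b, D x⁆)
      (hmem b) (fun j y hy => ?_) (by simp) fun b₁ b₂ h₁ h₂ => ?_
    · rw [hbr i j x hx y hy, hD i x hx, hD j y hy, lie_smul, lie_smul, ← lie_skew x y]
      module
    · simp only [lie_add, add_lie, map_add, h₁, h₂]; abel
  · simp only [lie_add, add_lie, map_add, h₁, h₂]; abel

lemma killingPolar_eq_orthogonal (r : LieSubalgebra ℝ L) :
    killingPolar r = (killingForm ℝ L).orthogonal r.toSubmodule := by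
  ext x
  refine forall₂_congr fun y _ => ?_
  rw [LieModule.traceForm_comm]

lemma lie_mem_killingPolar (r : LieSubalgebra ℝ L) {a x : L} (ha : a ∈ r)
    (hx : x ∈ killingPolar r) : ⁅a, x⁆ ∈ killingPolar r := by
  intro y hy
  rw [← lie_skew, LinearMap.map_neg₂, LieModule.traceForm_apply_lie_apply,
    hx _ (r.lie_mem ha hy), neg_zero]

section Killing

variable [FiniteDimensional ℝ L] [IsKilling ℝ L]

lemma orthogonal_killingPolar (r : LieSubalgebra ℝ L) :
    (killingForm ℝ L).orthogonal (killingPolar r) = r.toSubmodule := by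
  rw [killingPolar_eq_orthogonal, LinearMap.BilinForm.orthogonal_orthogonal
    (IsKilling.killingForm_nondegenerate ℝ L) (LieModule.traceForm_isSymm ℝ L L).isRefl]

namespace IsH1Parabolic

variable {p : LieSubalgebra ℝ L}

lemma lie_mem (hp : IsH1Parabolic p) {x : L} (hx : x ∈ killingPolar p) (u : L) :
    ⁅x, u⁆ ∈ p := by
  rw [← LieSubalgebra.mem_toSubmodule, ← orthogonal_killingPolar]
  intro w hw
  rw [LieModule.traceForm_comm, ← lie_skew,
    LinearMap.map_neg₂, LieModule.traceForm_apply_lie_apply, hp x hx w hw, map_zero, neg_zero]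

/-- `ad x ∘ ad y` squares to zero: `ad y` maps into `𝔭`, `ad x` maps `𝔭` into `𝔭^⊥`, and `ad y`
kills `𝔭^⊥`. -/
lemma killingForm_eq_zero (hp : IsH1Parabolic p) {x y : L} (hx : x ∈ killingPolar p)
    (hy : y ∈ killingPolar p) : killingForm ℝ L x y = 0 := by
  have hnil : IsNilpotent (ad ℝ L x ∘ₗ ad ℝ L y) := by
    refine ⟨2, LinearMap.ext fun v => ?_⟩
    have hxyv : ⁅x, ⁅y, v⁆⁆ ∈ killingPolar p := by
      rw [← lie_skew]
      exact neg_mem (lie_mem_killingPolar p (hp.lie_mem hy v) hx)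
    simp [pow_two, hp y hy _ hxyv]
  rw [killingForm_apply_apply]
  exact (LinearMap.isNilpotent_trace_of_isNilpotent hnil).eq_zero

lemma killingPolar_le (hp : IsH1Parabolic p) : killingPolar p ≤ p.toSubmodule := by
  rw [← orthogonal_killingPolar]
  exact fun x hx w hw => hp.killingForm_eq_zero hw hx

end IsH1Parabolic

end Killing

def IsGradingElement (p q : LieSubalgebra ℝ L) (ξ : L) : Prop :=
  (∀ x ∈ killingPolar p, ⁅ξ, x⁆ = -x) ∧ (∀ x, x ∈ p → x ∈ q → ⁅ξ, x⁆ = (0 : L)) ∧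
    (∀ x ∈ killingPolar q, ⁅ξ, x⁆ = x)

namespace ComplPair

variable {p q : LieSubalgebra ℝ L}

noncomputable def gradingMap (hpq : ComplPair p q) : Module.End ℝ L :=
  (killingPolar q).projection p.toSubmodule hpq.1.symm -
    (killingPolar p).projection q.toSubmodule hpq.2.symm

lemma gradingMap_apply_of_mem_inf (hpq : ComplPair p q) {x : L} (hxp : x ∈ p) (hxq : x ∈ q) :
    hpq.gradingMap x = 0 := by
  rw [gradingMap, LinearMap.sub_apply, (Submodule.projection_apply_eq_zero_iff _).2 hxp,
    (Submodule.projection_apply_eq_zero_iff _).2 hxq, sub_zero]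

variable [FiniteDimensional ℝ L] [IsKilling ℝ L]

lemma gradingMap_apply_of_mem_killingPolar_left (hp : IsH1Parabolic p) (hpq : ComplPair p q)
    {x : L} (hx : x ∈ killingPolar p) : hpq.gradingMap x = -x := by
  simp [gradingMap, Submodule.projection_apply_of_mem_left _ hx,
    (Submodule.projection_apply_eq_zero_iff _).2 (hp.killingPolar_le hx)]

lemma gradingMap_apply_of_mem_killingPolar_right (hq : IsH1Parabolic q) (hpq : ComplPair p q)
    {x : L} (hx : x ∈ killingPolar q) : hpq.gradingMap x = x := by
  simp [gradingMap, Submodule.projection_apply_of_mem_left _ hx,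
    (Submodule.projection_apply_eq_zero_iff _).2 (hq.killingPolar_le hx)]

lemma mem_of_gradingMap_apply_eq_zero (hp : IsH1Parabolic p) (hpq : ComplPair p q) {x : L}
    (hx : hpq.gradingMap x = 0) : x ∈ p ∧ x ∈ q := by
  set P := (killingPolar q).projection p.toSubmodule hpq.1.symm
  set Q := (killingPolar p).projection q.toSubmodule hpq.2.symm
  have hPQ : P x = Q x := sub_eq_zero.1 hx
  have hP : P x = 0 := by
    refine Submodule.disjoint_def.1 hpq.1.disjoint _ ?_ (Submodule.projection_apply_mem _ _)
    exact hPQ ▸ hp.killingPolar_le (Submodule.projection_apply_mem _ _)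
  rw [hP, eq_comm] at hPQ
  exact ⟨(Submodule.projection_apply_eq_zero_iff _).1 hP,
    (Submodule.projection_apply_eq_zero_iff _).1 hPQ⟩

lemma sup_eq_top (hp : IsH1Parabolic p) (hpq : ComplPair p q) :
    killingPolar p ⊔ (p.toSubmodule ⊓ q.toSubmodule) ⊔ killingPolar q = ⊤ := by
  have hsplit : killingPolar p ⊔ (q.toSubmodule ⊓ p.toSubmodule) = p.toSubmodule := by
    rw [← sup_inf_assoc_of_le _ hp.killingPolar_le, sup_comm, hpq.2.codisjoint.eq_top, top_inf_eq]
  rw [inf_comm, hsplit, hpq.1.codisjoint.eq_top]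

lemma gradingMap_leibniz (hp : IsH1Parabolic p) (hq : IsH1Parabolic q) (hpq : ComplPair p q)
    (a b : L) :
    hpq.gradingMap ⁅a, b⁆ = ⁅a, hpq.gradingMap b⁆ - ⁅b, hpq.gradingMap a⁆ := by
  have hL : ∀ {z}, z ∈ killingPolar p → hpq.gradingMap z = -z :=
    hpq.gradingMap_apply_of_mem_killingPolar_left hp
  have h0 : ∀ {z}, z ∈ p → z ∈ q → hpq.gradingMap z = 0 := hpq.gradingMap_apply_of_mem_inf
  have hR : ∀ {z}, z ∈ killingPolar q → hpq.gradingMap z = z :=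
    hpq.gradingMap_apply_of_mem_killingPolar_right hq
  have hswap {S : Submodule ℝ L} {x y : L} (h : ⁅y, x⁆ ∈ S) : ⁅x, y⁆ ∈ S := by
    rw [← lie_skew]; exact neg_mem h
  refine Module.End.leibniz_of_weights
    (V := ![killingPolar p, p.toSubmodule ⊓ q.toSubmodule, killingPolar q]) (c := ![-1, 0, 1])
    ?_ ?_ ?_ a b
  · rw [eq_top_iff, ← hpq.sup_eq_top hp]
    exact sup_le (sup_le (le_iSup_of_le 0 le_rfl) (le_iSup_of_le 1 le_rfl)) (le_iSup_of_le 2 le_rfl)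
  · intro i
    fin_cases i <;> intro x hx <;> dsimp at hx ⊢
    · rw [hL hx, neg_one_smul]
    · rw [h0 hx.1 hx.2, zero_smul]
    · rw [hR hx, one_smul]
  · intro i j
    fin_cases i <;> fin_cases j <;> intro x hx y hy <;> dsimp at hx hy ⊢
    · rw [hp x hx y hy, map_zero, smul_zero]
    · rw [hL (hswap (lie_mem_killingPolar p hy.1 hx))]; module
    · rw [h0 (hp.lie_mem hx y) (hswap (hq.lie_mem hy x))]; module
    · rw [hL (lie_mem_killingPolar p hx.1 hy)]; module
    · rw [h0 (p.lie_mem hx.1 hy.1) (q.lie_mem hx.2 hy.2)]; module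
    · rw [hR (lie_mem_killingPolar q hx.2 hy)]; module
    · rw [h0 (hswap (hp.lie_mem hy x)) (hq.lie_mem hx y)]; module
    · rw [hR (hswap (lie_mem_killingPolar q hy.2 hx))]; module
    · rw [hq x hx y hy, map_zero, smul_zero]

lemma isGradingElement_iff (hp : IsH1Parabolic p) (hq : IsH1Parabolic q) (hpq : ComplPair p q)
    {ξ : L} : IsGradingElement p q ξ ↔ ∀ v, ⁅ξ, v⁆ = hpq.gradingMap v := by
  constructor
  · rintro ⟨hL, h0, hR⟩ v
    have heq : Set.EqOn (ad ℝ L ξ) hpq.gradingMap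
        ↑(killingPolar p ⊔ (p.toSubmodule ⊓ q.toSubmodule) ⊔ killingPolar q) := by
      refine LinearMap.eqOn_sup (LinearMap.eqOn_sup (fun x hx => ?_) fun x hx => ?_) fun x hx => ?_
      · rw [ad_apply, hL x hx, hpq.gradingMap_apply_of_mem_killingPolar_left hp hx]
      · rw [ad_apply, h0 x hx.1 hx.2, hpq.gradingMap_apply_of_mem_inf hx.1 hx.2]
      · rw [ad_apply, hR x hx, hpq.gradingMap_apply_of_mem_killingPolar_right hq hx]
    rw [hpq.sup_eq_top hp] at heq
    exact heq (Submodule.mem_top (x := v))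
  · intro h
    refine ⟨fun x hx => ?_, fun x hxp hxq => ?_, fun x hx => ?_⟩
    · rw [h, hpq.gradingMap_apply_of_mem_killingPolar_left hp hx]
    · rw [h, hpq.gradingMap_apply_of_mem_inf hxp hxq]
    · rw [h, hpq.gradingMap_apply_of_mem_killingPolar_right hq hx]

end ComplPair

/-- **Existence and uniqueness of the grading element** of a complementary pair
`(𝔭, 𝔮)` of height-one parabolic subalgebras: there is a unique `ξ ∈ 𝔤` acting by
`-1` on `𝔭^⊥`, `0` on `𝔭 ∩ 𝔮` and `+1` on `𝔮^⊥`; moreover `ξ` lies in the centre of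
the subalgebra `𝔭 ∩ 𝔮`. -/
theorem exists_unique_grading_element
    [FiniteDimensional ℝ L] [LieAlgebra.IsSemisimple ℝ L]
    (p q : LieSubalgebra ℝ L) (hp : IsH1Parabolic p) (hq : IsH1Parabolic q)
    (hpq : ComplPair p q) :
    ∃ ξ : L,
      ((∀ x ∈ killingPolar p, ⁅ξ, x⁆ = -x) ∧
        (∀ x, x ∈ p → x ∈ q → ⁅ξ, x⁆ = (0 : L)) ∧
        (∀ x ∈ killingPolar q, ⁅ξ, x⁆ = x)) ∧
      -- uniqueness
      (∀ ξ' : L,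
        ((∀ x ∈ killingPolar p, ⁅ξ', x⁆ = -x) ∧
          (∀ x, x ∈ p → x ∈ q → ⁅ξ', x⁆ = (0 : L)) ∧
          (∀ x ∈ killingPolar q, ⁅ξ', x⁆ = x)) → ξ' = ξ) ∧
      -- the grading element lies in the centre of 𝔭 ∩ 𝔮
      (ξ ∈ p ∧ ξ ∈ q ∧ ∀ x, x ∈ p → x ∈ q → ⁅ξ, x⁆ = (0 : L)) := by
  obtain ⟨ξ, hξ⟩ := LieDerivation.IsKilling.exists_eq_ad
    (⟨hpq.gradingMap, hpq.gradingMap_leibniz hp hq⟩ : LieDerivation ℝ L L)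
  have hact : ∀ v, ⁅ξ, v⁆ = hpq.gradingMap v := fun v => by
    simpa using DFunLike.congr_fun hξ v
  have hgrad : IsGradingElement p q ξ := (hpq.isGradingElement_iff hp hq).2 hact
  refine ⟨ξ, hgrad, fun ξ' hξ' => ?_, ?_⟩
  · refine LieDerivation.injective_ad_of_center_eq_bot (center_eq_bot ℝ L) ?_
    ext v
    simp [(hpq.isGradingElement_iff hp hq).1 hξ', hact]
  · obtain ⟨hξp, hξq⟩ := hpq.mem_of_gradingMap_apply_eq_zero hp (by rw [← hact, lie_self])
    exact ⟨hξp, hξq, hgrad.2.1⟩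
end

section
/- Let 𝔤 be a finite-dimensional real semisimple Lie algebra, U an open subset of a finite-dimensional real normed space E, f a map assigning to each x ∈ U a height-one parabolic subalgebra f(x) ≤ 𝔤, and η a 𝔤-valued 1-form on U with η_x(u) ∈ f(x)^⊥ for all x ∈ U and u ∈ E. Then η is closed if and only if for every t ∈ ℝ the connection ∇^t = d + tη is flat, i.e. t·(dη)_x(u, v) + t²·⁅η_x(u), η_x(v)⁆ = 0 for all x ∈ U and u, v ∈ E. -/
open Module

/-- A Lie algebra structure on a real normed space, recorded as a bilinear bracket.
(Using a bracket carried as data avoids typeclass diamonds between the normed and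
the Lie-algebraic structure.) -/
structure LieStructure (L : Type*) [NormedAddCommGroup L] [NormedSpace ℝ L] where
  bracket : L →ₗ[ℝ] L →ₗ[ℝ] L
  alternating : ∀ x : L, bracket x x = 0
  jacobi : ∀ x y z : L, bracket x (bracket y z) =
    bracket (bracket x y) z + bracket y (bracket x z)

namespace LieStructure

variable {L : Type*} [NormedAddCommGroup L] [NormedSpace ℝ L] (B : LieStructure L)

/-- The adjoint action `ad x = ⁅x, ·⁆`. -/
def ad (x : L) : Module.End ℝ L := B.bracket x

/-- The Killing form `κ(x, y) = tr (ad x ∘ ad y)`. -/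
noncomputable def killing (x y : L) : ℝ := LinearMap.trace ℝ L (B.ad x * B.ad y)

/-- Semisimplicity, via Cartan's criterion: the Killing form is nondegenerate. -/
def IsSemisimple : Prop := ∀ x : L, (∀ y : L, B.killing x y = 0) → x = 0

/-- A Lie subalgebra: a submodule closed under the bracket. -/
def IsSubalgebra (p : Submodule ℝ L) : Prop :=
  ∀ x ∈ p, ∀ y ∈ p, B.bracket x y ∈ p

/-- The Killing polar `𝔭^⊥`. -/
noncomputable def polar (p : Submodule ℝ L) : Submodule ℝ L where
  carrier := {x | ∀ y ∈ p, B.killing x y = 0}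
  add_mem' := fun {a b} ha hb y hy => by
    have : B.killing (a + b) y = B.killing a y + B.killing b y := by
      simp [killing, ad, map_add, add_mul]
    rw [this, ha y hy, hb y hy, add_zero]
  zero_mem' := fun y hy => by simp [killing, ad, map_zero, zero_mul]
  smul_mem' := fun c a ha y hy => by
    have : B.killing (c • a) y = c * B.killing a y := by
      simp [killing, ad, map_smul, smul_mul_assoc]
    rw [this, ha y hy, mul_zero]

/-- A height-one parabolic subalgebra: a subalgebra whose Killing polar is an
abelian (hence nilpotent) subalgebra. -/
def IsH1Parabolic (p : Submodule ℝ L) : Prop :=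
  B.IsSubalgebra p ∧ ∀ x ∈ B.polar p, ∀ y ∈ B.polar p, B.bracket x y = 0

end LieStructure

open LieStructure

theorem forall_smul_add_sq_smul_eq_zero_iff {K M : Type*} [Field K] [NeZero (2 : K)]
    [AddCommGroup M] [Module K M] {a b : M} :
    (∀ t : K, t • a + t ^ 2 • b = 0) ↔ a = 0 ∧ b = 0 := by
  refine ⟨fun h => ?_, fun ⟨ha, hb⟩ t => by rw [ha, hb, smul_zero, smul_zero, add_zero]⟩
  have h₁ : a + b = 0 := by simpa using h 1
  have hneg : -a + b = 0 := by simpa using h (-1)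
  have htwo : (2 : K) • b = (a + b) + (-a + b) := by module
  rw [h₁, hneg, add_zero] at htwo
  have hb : b = 0 := (smul_eq_zero.1 htwo).resolve_left two_ne_zero
  exact ⟨by simpa [hb] using h₁, hb⟩

theorem closed_iff_flat_pencil_general
    {L : Type*} [NormedAddCommGroup L] [NormedSpace ℝ L]
    (B : LieStructure L)
    {E : Type*} [NormedAddCommGroup E] [NormedSpace ℝ E]
    (U : Set E)
    (f : E → Submodule ℝ L) (hf : ∀ x ∈ U, B.IsH1Parabolic (f x))
    (η : E → E →L[ℝ] L)
    (hval : ∀ x ∈ U, ∀ u : E, η x u ∈ B.polar (f x)) :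
    (∀ x ∈ U, ∀ u v : E, fderiv ℝ η x u v - fderiv ℝ η x v u = 0) ↔
    (∀ t : ℝ, ∀ x ∈ U, ∀ u v : E,
      t • (fderiv ℝ η x u v - fderiv ℝ η x v u)
        + (t ^ 2) • B.bracket (η x u) (η x v) = 0) := by
  have hbracket : ∀ x ∈ U, ∀ u v : E, B.bracket (η x u) (η x v) = 0 := fun x hx u v =>
    (hf x hx).2 _ (hval x hx u) _ (hval x hx v)
  constructor
  · intro hclosed t x hx u v
    rw [hclosed x hx u v, hbracket x hx u v, smul_zero, smul_zero, add_zero]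
  · intro hflat x hx u v
    exact (forall_smul_add_sq_smul_eq_zero_iff.1 fun t => hflat t x hx u v).1

/-- **Zero-curvature representation of the isothermic condition.**  For a map `f`
into a symmetric `R`-space (a family of height-one parabolic subalgebras) and a
`𝔤`-valued 1-form `η` with `η_x(u) ∈ f(x)^⊥`, `η` is closed if and only if every
connection `∇ᵗ = d + tη` is flat. -/
theorem closed_iff_flat_pencil
    {L : Type*} [NormedAddCommGroup L] [NormedSpace ℝ L] [FiniteDimensional ℝ L]
    (B : LieStructure L) (hss : B.IsSemisimple)
    {E : Type*} [NormedAddCommGroup E] [NormedSpace ℝ E] [FiniteDimensional ℝ E]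
    (U : Set E) (hU : IsOpen U)
    (f : E → Submodule ℝ L) (hf : ∀ x ∈ U, B.IsH1Parabolic (f x))
    (η : E → E →L[ℝ] L) (hη : ContDiffOn ℝ (⊤ : ℕ∞) η U)
    (hval : ∀ x ∈ U, ∀ u : E, η x u ∈ B.polar (f x)) :
    (∀ x ∈ U, ∀ u v : E, fderiv ℝ η x u v - fderiv ℝ η x v u = 0) ↔
    (∀ t : ℝ, ∀ x ∈ U, ∀ u v : E,
      t • (fderiv ℝ η x u v - fderiv ℝ η x v u)
        + (t ^ 2) • B.bracket (η x u) (η x v) = 0) :=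
  closed_iff_flat_pencil_general B U f hf η hval
end

section
/- Let 𝔤 be a finite-dimensional real semisimple Lie algebra, U an open connected subset of a finite-dimensional real normed space, and ξ : U → 𝔤 a complementary-pair configuration with parabolic bundles f, f̂ and 1-forms β, β̂; set 𝒩 := −β − β̂ (the pull-back of the solder form of the symmetric space Z of complementary pairs under φ = (f, f̂)). Then the following are equivalent: (i) ⁅𝒩_x(u), 𝒩_x(v)⁆ = 0 for all x, u, v (φ is a curved flat); (ii) β is closed; (iii) β̂ is closed. Moreover, when these hold, for every m ∈ ℝ∖{0} the pairs (f, β̂/m) and (f̂, β/m) are isothermic and each is a Darboux transform of the other with parameter m: f̂ is parallel for d + m·(β̂/m) and f is parallel for d + m·(β/m). -/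
/-!
Differentiating `(ad ξ)³ = ad ξ` shows that `D = ad (dξ(u))` satisfies `D A² + A D A + A² D = D`
for `A = ad ξ`. Together with the fact that the degree-zero part of `dξ(u)` commutes with `A`,
this forces `ad` of that part to vanish, so by nondegeneracy of the Killing form
`dξ(u) = β(u) − β̂(u) ∈ 𝔤₁ ⊕ 𝔤₋₁`. Hence `β = ½ (dξ + ⁅ξ, dξ⁆)` and `β̂ = −½ (dξ − ⁅ξ, dξ⁆)`;
as the second derivative of `ξ` is symmetric, both have exterior derivative `⁅dξ ∧ dξ⁆`, while
`⁅𝒩 ∧ 𝒩⁆ = −⁅dξ ∧ dξ⁆` because `⁅𝔤₁, 𝔤₁⁆ = ⁅𝔤₋₁, 𝔤₋₁⁆ = 0`. So all three conditions say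
`⁅dξ ∧ dξ⁆ = 0`. Parallelism of `f̂ = ker (A² − A)` for `d + β̂` follows by differentiating
`(A² − A) ψ = 0` and counting degrees; replacing `ξ` by `−ξ` swaps `β, β̂` and `f, f̂`.
-/

open Module

namespace LieStructure

variable {L : Type*} [NormedAddCommGroup L] [NormedSpace ℝ L] (B : LieStructure L)

/-- Complementary pair of height-one parabolic subalgebras:
`𝔤 = 𝔭 ⊕ 𝔮^⊥` and `𝔤 = 𝔮 ⊕ 𝔭^⊥`. -/
noncomputable def ComplPair (p q : Submodule ℝ L) : Prop :=
  IsCompl p (B.polar q) ∧ IsCompl q (B.polar p)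

/-- `exp (ad z)`, the finite exponential series of the adjoint action (exhaustive
whenever `ad z` is nilpotent, since then `(ad z)^(dim 𝔤 + 1) = 0`). -/
noncomputable def expAd [FiniteDimensional ℝ L] (z : L) : Module.End ℝ L :=
  ∑ k ∈ Finset.range (Module.finrank ℝ L + 1), (k.factorial : ℝ)⁻¹ • (B.ad z) ^ k

end LieStructure

namespace LieStructure

variable {L : Type*} [NormedAddCommGroup L] [NormedSpace ℝ L] (B : LieStructure L)

/-- The `j`-eigenspace `𝔤_j(x) = ker (ad ξ(x) − j·id)` of a complementary-pair
configuration. -/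
noncomputable def eigSp (ξx : L) (j : ℝ) : Submodule ℝ L :=
  LinearMap.ker (B.ad ξx - j • (1 : Module.End ℝ L))

variable {E : Type*} [NormedAddCommGroup E] [NormedSpace ℝ E]

/-- The 1-form `β`, the `𝔤₁`-part of `dξ`: `β_x(u) = ½((ad ξ(x))² + ad ξ(x))(dξ_x(u))`. -/
noncomputable def beta [FiniteDimensional ℝ L] (ξ : E → L) (x : E) : E →L[ℝ] L :=
  (LinearMap.toContinuousLinearMap
    ((2⁻¹ : ℝ) • ((B.ad (ξ x)) ^ 2 + B.ad (ξ x)))).comp (fderiv ℝ ξ x)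

/-- The 1-form `β̂`, the `𝔤₋₁`-part of `dξ`:
`β̂_x(u) = −½((ad ξ(x))² − ad ξ(x))(dξ_x(u))`. -/
noncomputable def betaHat [FiniteDimensional ℝ L] (ξ : E → L) (x : E) : E →L[ℝ] L :=
  (LinearMap.toContinuousLinearMap
    (-((2⁻¹ : ℝ) • ((B.ad (ξ x)) ^ 2 - B.ad (ξ x))))).comp (fderiv ℝ ξ x)

end LieStructure

open LieStructure

theorem eq_lie_lie_of_pow_three_eq {R : Type*} [Ring R] [IsAddTorsionFree R] {A D : R}
    (hA : A ^ 3 = A) (hD : D * A ^ 2 + A * D * A + A ^ 2 * D = D)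
    (hcomm : Commute A (D - ⁅A, ⁅A, D⁆⁆)) : D = ⁅A, ⁅A, D⁆⁆ := by
  set X := A * D * A
  have hK : D - ⁅A, ⁅A, D⁆⁆ = 3 • X := by
    calc D - ⁅A, ⁅A, D⁆⁆ = (D * A ^ 2 + A * D * A + A ^ 2 * D) - ⁅A, ⁅A, D⁆⁆ := by rw [hD]
      _ = 3 • X := by simp only [X, Ring.lie_def]; noncomm_ring
  have hXA : A * X = X * A := by
    rw [hK] at hcomm
    exact nsmul_right_injective (by norm_num : (3 : ℕ) ≠ 0)
      (by simpa only [mul_smul_comm, smul_mul_assoc] using hcomm.eq)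
  have hAXA : A * X * A = X := by
    rw [hXA, mul_assoc X, ← pow_two]
    simp only [X, mul_assoc, ← pow_succ', hA]
  have hAXA' : A * X * A = -X := by
    have h : X + A * X * A + X = X := by
      calc _ = A * D * A ^ 3 + A * X * A + A ^ 3 * D * A := by rw [hA]
        _ = A * (D * A ^ 2 + A * D * A + A ^ 2 * D) * A := by simp only [X]; noncomm_ring
        _ = X := by rw [hD]
    calc A * X * A = (X + A * X * A + X) - X - X := by abel
      _ = -X := by rw [h]; abel
  have hX : X = 0 := self_eq_neg.1 (hAXA.symm.trans hAXA')
  rw [← sub_eq_zero, hK, hX, smul_zero]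

def IsClosedFormOn {E F : Type*} [NormedAddCommGroup E] [NormedSpace ℝ E]
    [NormedAddCommGroup F] [NormedSpace ℝ F] (U : Set E) (η : E → E →L[ℝ] F) : Prop :=
  ∀ x ∈ U, ∀ u v : E, fderiv ℝ η x u v = fderiv ℝ η x v u

lemma IsClosedFormOn.const_smul {E F : Type*} [NormedAddCommGroup E] [NormedSpace ℝ E]
    [NormedAddCommGroup F] [NormedSpace ℝ F] {U : Set E} {η : E → E →L[ℝ] F}
    (h : IsClosedFormOn U η) (c : ℝ) : IsClosedFormOn U fun y => c • η y := fun x hx u v => by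
  rw [show (fun y => c • η y) = c • η from rfl, fderiv_const_smul_field (f := η) c]
  simp [h x hx u v]

namespace LieStructure

variable {L : Type*} [NormedAddCommGroup L] [NormedSpace ℝ L] (B : LieStructure L)

lemma ad_apply (x y : L) : B.ad x y = B.bracket x y := rfl

lemma bracket_swap (x y : L) : B.bracket y x = -B.bracket x y := by
  have h := B.alternating (x + y)
  rw [map_add, map_add, LinearMap.add_apply, LinearMap.add_apply, B.alternating, B.alternating,
    zero_add, add_zero] at h
  exact eq_neg_of_add_eq_zero_left h

lemma ad_sub (x y : L) : B.ad (x - y) = B.ad x - B.ad y := map_sub _ _ _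

lemma ad_neg (x : L) : B.ad (-x) = -B.ad x := map_neg _ _

lemma ad_bracket (x y : L) : B.ad (B.bracket x y) = ⁅B.ad x, B.ad y⁆ := by
  ext w
  simp only [Ring.lie_def, LinearMap.sub_apply, Module.End.mul_apply, ad_apply]
  rw [B.jacobi x y w]
  abel

lemma bracket_bracket_bracket {z : L} (hz : B.ad z ^ 3 = B.ad z) (w : L) :
    B.bracket z (B.bracket z (B.bracket z w)) = B.bracket z w :=
  LinearMap.congr_fun hz w

lemma eq_zero_of_ad_eq_zero (hss : B.IsSemisimple) {x : L} (hx : B.ad x = 0) : x = 0 :=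
  hss x fun y => by simp [killing, hx]

lemma bracket_bracket_eq_self_of_pow_three_eq (hss : B.IsSemisimple) {z T : L}
    (hz : B.ad z ^ 3 = B.ad z)
    (hT : B.ad T * B.ad z ^ 2 + B.ad z * B.ad T * B.ad z + B.ad z ^ 2 * B.ad T = B.ad T) :
    B.bracket z (B.bracket z T) = T := by
  have hT₀ : B.ad (T - B.bracket z (B.bracket z T)) = B.ad T - ⁅B.ad z, ⁅B.ad z, B.ad T⁆⁆ := by
    rw [ad_sub, ad_bracket, ad_bracket]
  have hcomm : Commute (B.ad z) (B.ad T - ⁅B.ad z, ⁅B.ad z, B.ad T⁆⁆) := by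
    rw [← hT₀, commute_iff_lie_eq, ← ad_bracket, map_sub, B.bracket_bracket_bracket hz,
      sub_self]
    exact map_zero B.bracket
  have := IsAddTorsionFree.of_isTorsionFree ℝ (Module.End ℝ L)
  have hzero := sub_eq_zero.2 (eq_lie_lie_of_pow_three_eq hz hT hcomm)
  exact (sub_eq_zero.1 (B.eq_zero_of_ad_eq_zero hss (hT₀.trans hzero))).symm

lemma mem_eigSp_iff {z v : L} {j : ℝ} : v ∈ B.eigSp z j ↔ B.bracket z v = j • v := by
  simp [eigSp, sub_eq_zero, ad_apply]

lemma bracket_mem_eigSp {z a b : L} {i j : ℝ} (ha : a ∈ B.eigSp z i) (hb : b ∈ B.eigSp z j) :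
    B.bracket a b ∈ B.eigSp z (i + j) := by
  rw [mem_eigSp_iff] at *
  rw [B.jacobi, ha, hb, map_smul, LinearMap.smul_apply, map_smul, add_smul]

lemma eq_zero_of_mem_eigSp {z v : L} {j : ℝ} (hz : B.ad z ^ 3 = B.ad z)
    (hv : v ∈ B.eigSp z j) (hj : j ^ 3 ≠ j) : v = 0 := by
  rw [mem_eigSp_iff] at hv
  have h := B.bracket_bracket_bracket hz v
  simp only [hv, map_smul, smul_smul] at h
  have h' : (j ^ 3 - j) • v = 0 := by rw [sub_smul, show j ^ 3 = j * j * j by ring, h, sub_self]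
  exact (smul_eq_zero.1 h').resolve_left (sub_ne_zero.2 hj)

lemma eigSp_sup_eigSp {a b : ℝ} (hab : a ≠ b) (z : L) :
    B.eigSp z a ⊔ B.eigSp z b =
      LinearMap.ker ((B.ad z - a • 1) * (B.ad z - b • 1)) := by
  have hcop := Polynomial.isCoprime_X_sub_C_of_isUnit_sub (sub_ne_zero.2 hab).isUnit
  have := Polynomial.sup_ker_aeval_eq_ker_aeval_mul_of_coprime (B.ad z) hcop
  simpa [eigSp, Polynomial.aeval_X, Algebra.algebraMap_eq_smul_one] using this

lemma mem_eigSp_zero_sup_one_iff {z v : L} :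
    v ∈ B.eigSp z 0 ⊔ B.eigSp z 1 ↔ B.bracket z (B.bracket z v) = B.bracket z v := by
  rw [B.eigSp_sup_eigSp zero_ne_one]
  simp [sub_eq_zero, ad_apply]

lemma eigSp_neg (z : L) (j : ℝ) : B.eigSp (-z) j = B.eigSp z (-j) := by
  ext v; simp [mem_eigSp_iff, neg_eq_iff_eq_neg]

lemma ad_neg_pow_three {z : L} (hz : B.ad z ^ 3 = B.ad z) : B.ad (-z) ^ 3 = B.ad (-z) := by
  rw [ad_neg, Odd.neg_pow (by decide), hz]

lemma bracket_eigSp_eq {z a b : L} {i j k : ℝ} (ha : a ∈ B.eigSp z i) (hb : b ∈ B.eigSp z j)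
    (hk : i + j = k) : B.bracket z (B.bracket a b) = k • B.bracket a b :=
  (B.mem_eigSp_iff).1 (hk ▸ B.bracket_mem_eigSp ha hb)

lemma neg_sub_bracket_neg_sub {z a b c d : L} (hz : B.ad z ^ 3 = B.ad z)
    (ha : a ∈ B.eigSp z 1) (hb : b ∈ B.eigSp z (-1))
    (hc : c ∈ B.eigSp z 1) (hd : d ∈ B.eigSp z (-1)) :
    B.bracket (-a - b) (-c - d) = -B.bracket (a - b) (c - d) := by
  have hac := B.eq_zero_of_mem_eigSp hz (B.bracket_mem_eigSp ha hc) (by norm_num)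
  have hbd := B.eq_zero_of_mem_eigSp hz (B.bracket_mem_eigSp hb hd) (by norm_num)
  simp only [map_sub, map_neg, LinearMap.sub_apply, LinearMap.neg_apply, hac, hbd]
  abel

lemma add_bracket_mem_eigSp_zero_sup_one {z a b ψ ψ' : L} (hz : B.ad z ^ 3 = B.ad z)
    (ha : a ∈ B.eigSp z 1) (hb : b ∈ B.eigSp z (-1)) (hψ : ψ ∈ B.eigSp z 0 ⊔ B.eigSp z 1)
    (hψ' : B.bracket (a - b) (B.bracket z ψ) + B.bracket z (B.bracket (a - b) ψ) +
      B.bracket z (B.bracket z ψ') = B.bracket (a - b) ψ + B.bracket z ψ') :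
    ψ' + B.bracket b ψ ∈ B.eigSp z 0 ⊔ B.eigSp z 1 := by
  obtain ⟨ψ₀, h₀, ψ₁, h₁, rfl⟩ := Submodule.mem_sup.1 hψ
  have hzψ₀ : B.bracket z ψ₀ = 0 := by simpa using (B.mem_eigSp_iff).1 h₀
  have hzψ₁ : B.bracket z ψ₁ = ψ₁ := by simpa using (B.mem_eigSp_iff).1 h₁
  have haψ₁ := B.eq_zero_of_mem_eigSp hz (B.bracket_mem_eigSp ha h₁) (by norm_num)
  have haψ₀ : B.bracket z (B.bracket a ψ₀) = B.bracket a ψ₀ := by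
    simpa using B.bracket_eigSp_eq ha h₀ (add_zero 1)
  have hbψ₀ : B.bracket z (B.bracket b ψ₀) = -B.bracket b ψ₀ := by
    simpa using B.bracket_eigSp_eq hb h₀ (add_zero (-1))
  have hbψ₁ : B.bracket z (B.bracket b ψ₁) = 0 := by
    simpa using B.bracket_eigSp_eq hb h₁ (neg_add_cancel 1)
  rw [B.mem_eigSp_zero_sup_one_iff]
  simp only [map_add, map_sub, LinearMap.sub_apply, hzψ₀, hzψ₁, haψ₁,
    haψ₀, hbψ₀, hbψ₁, map_zero, map_neg] at hψ' ⊢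
  linear_combination (norm := module) hψ'

open Filter Topology

variable [FiniteDimensional ℝ L] {E : Type*} [NormedAddCommGroup E] [NormedSpace ℝ E]

noncomputable def bracketL : L →L[ℝ] L →L[ℝ] L :=
  LinearMap.toContinuousLinearMap (LinearMap.toContinuousLinearMap.toLinearMap ∘ₗ B.bracket)

@[simp] lemma bracketL_apply (x y : L) : B.bracketL x y = B.bracket x y := rfl

lemma hasFDerivAt_bracket {f g : E → L} {f' g' : E →L[ℝ] L} {x : E}
    (hf : HasFDerivAt f f' x) (hg : HasFDerivAt g g' x) :
    HasFDerivAt (fun y => B.bracket (f y) (g y))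
      ((B.bracketL (f x)).comp g' + (B.bracketL.flip (g x)).comp f') x :=
  B.bracketL.hasFDerivAt_of_bilinear hf hg

lemma beta_apply (ξ : E → L) (x u : E) :
    B.beta ξ x u = (2⁻¹ : ℝ) • (B.bracket (ξ x) (B.bracket (ξ x) (fderiv ℝ ξ x u)) +
      B.bracket (ξ x) (fderiv ℝ ξ x u)) := by
  simp [beta, ad_apply, pow_two]

lemma betaHat_apply (ξ : E → L) (x u : E) :
    B.betaHat ξ x u = -((2⁻¹ : ℝ) • (B.bracket (ξ x) (B.bracket (ξ x) (fderiv ℝ ξ x u)) -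
      B.bracket (ξ x) (fderiv ℝ ξ x u))) := by
  simp [betaHat, ad_apply, pow_two]

lemma betaHat_neg (ξ : E → L) : B.betaHat (-ξ) = B.beta ξ := by
  ext x u
  simp only [betaHat_apply, beta_apply, fderiv_neg, Pi.neg_apply, neg_apply,
    map_neg, LinearMap.neg_apply, neg_neg]
  module

lemma beta_mem_eigSp_one {ξ : E → L} {x : E} (hz : B.ad (ξ x) ^ 3 = B.ad (ξ x)) (u : E) :
    B.beta ξ x u ∈ B.eigSp (ξ x) 1 := by
  rw [mem_eigSp_iff, beta_apply, map_smul, map_add, B.bracket_bracket_bracket hz, one_smul,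
    add_comm]

lemma betaHat_mem_eigSp_neg_one {ξ : E → L} {x : E} (hz : B.ad (ξ x) ^ 3 = B.ad (ξ x))
    (u : E) : B.betaHat ξ x u ∈ B.eigSp (ξ x) (-1) := by
  rw [mem_eigSp_iff, betaHat_apply, map_neg, map_smul, map_sub, B.bracket_bracket_bracket hz]
  module

lemma bracket_bracket_fderiv (hss : B.IsSemisimple) {ξ : E → L} {x : E}
    (hξ : DifferentiableAt ℝ ξ x) (hconf : ∀ᶠ y in 𝓝 x, B.ad (ξ y) ^ 3 = B.ad (ξ y))
    (u : E) : B.bracket (ξ x) (B.bracket (ξ x) (fderiv ℝ ξ x u)) = fderiv ℝ ξ x u := by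
  refine B.bracket_bracket_eq_self_of_pow_three_eq hss hconf.self_of_nhds ?_
  ext w
  have hd := hξ.hasFDerivAt
  have h := (B.hasFDerivAt_bracket hd (B.hasFDerivAt_bracket hd (B.hasFDerivAt_bracket hd
    (hasFDerivAt_const w x)))).sub (B.hasFDerivAt_bracket hd (hasFDerivAt_const w x))
  have h0 := h.unique ((hasFDerivAt_const 0 x).congr_of_eventuallyEq <|
    hconf.mono fun y hy => sub_eq_zero.2 (B.bracket_bracket_bracket hy w))
  have hu := DFunLike.congr_fun h0 u
  simp only [ContinuousLinearMap.comp_zero, zero_add, ContinuousLinearMap.comp_add,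
    sub_apply, add_apply, ContinuousLinearMap.comp_apply,
    ContinuousLinearMap.flip_apply, bracketL_apply, zero_apply] at hu
  simp only [pow_two, LinearMap.add_apply, Module.End.mul_apply, ad_apply]
  rw [← sub_eq_zero, ← hu]
  abel

lemma fderiv_eq_beta_sub_betaHat (hss : B.IsSemisimple) {ξ : E → L} {x : E}
    (hξ : DifferentiableAt ℝ ξ x) (hconf : ∀ᶠ y in 𝓝 x, B.ad (ξ y) ^ 3 = B.ad (ξ y))
    (u : E) : fderiv ℝ ξ x u = B.beta ξ x u - B.betaHat ξ x u := by
  rw [beta_apply, betaHat_apply, B.bracket_bracket_fderiv hss hξ hconf]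
  module

lemma bracket_neg_beta_sub_betaHat (hss : B.IsSemisimple) {ξ : E → L} {x : E}
    (hξ : DifferentiableAt ℝ ξ x) (hconf : ∀ᶠ y in 𝓝 x, B.ad (ξ y) ^ 3 = B.ad (ξ y))
    (u v : E) :
    B.bracket (-(B.beta ξ x u) - B.betaHat ξ x u) (-(B.beta ξ x v) - B.betaHat ξ x v) =
      -B.bracket (fderiv ℝ ξ x u) (fderiv ℝ ξ x v) := by
  have hz := hconf.self_of_nhds
  rw [B.fderiv_eq_beta_sub_betaHat hss hξ hconf u, B.fderiv_eq_beta_sub_betaHat hss hξ hconf v]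
  exact B.neg_sub_bracket_neg_sub hz (B.beta_mem_eigSp_one hz u)
    (B.betaHat_mem_eigSp_neg_one hz u) (B.beta_mem_eigSp_one hz v)
    (B.betaHat_mem_eigSp_neg_one hz v)

lemma fderiv_apply_sub_swap_of_eventuallyEq {ξ : E → L} {x : E} (hξ : ContDiffAt ℝ 2 ξ x)
    {η : E → E →L[ℝ] L} (c : ℝ)
    (hη : η =ᶠ[𝓝 x] fun y => c • fderiv ℝ ξ y + (2⁻¹ : ℝ) • (B.bracketL (ξ y)).comp (fderiv ℝ ξ y))
    (u v : E) :
    fderiv ℝ η x u v - fderiv ℝ η x v u = B.bracket (fderiv ℝ ξ x u) (fderiv ℝ ξ x v) := by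
  have hd := (hξ.differentiableAt two_ne_zero).hasFDerivAt
  have hdd := ((hξ.fderiv_right (m := 1) (by norm_num)).differentiableAt one_ne_zero).hasFDerivAt
  have had : HasFDerivAt (fun y => B.bracketL (ξ y)) (B.bracketL.comp (fderiv ℝ ξ x)) x :=
    B.bracketL.hasFDerivAt.comp x hd
  have h : HasFDerivAt (fun y => c • fderiv ℝ ξ y +
      (2⁻¹ : ℝ) • (B.bracketL (ξ y)).comp (fderiv ℝ ξ y)) _ x :=
    (hdd.const_smul c).add ((had.clm_comp hdd).const_smul (2⁻¹ : ℝ))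
  have hsymm := hξ.isSymmSndFDerivAt (by simp) u v
  rw [hη.fderiv_eq, h.fderiv]
  simp only [smul_add, add_apply, smul_apply, ContinuousLinearMap.comp_apply,
    ContinuousLinearMap.compL_apply, ContinuousLinearMap.flip_apply, bracketL_apply]
  rw [hsymm, B.bracket_swap (fderiv ℝ ξ x u)]
  module

lemma fderiv_beta_apply_sub_swap (hss : B.IsSemisimple) {ξ : E → L} {x : E}
    (hξ : ContDiffAt ℝ 2 ξ x) (hconf : ∀ᶠ y in 𝓝 x, B.ad (ξ y) ^ 3 = B.ad (ξ y)) (u v : E) :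
    fderiv ℝ (fun y => B.beta ξ y) x u v - fderiv ℝ (fun y => B.beta ξ y) x v u =
      B.bracket (fderiv ℝ ξ x u) (fderiv ℝ ξ x v) := by
  refine B.fderiv_apply_sub_swap_of_eventuallyEq hξ 2⁻¹ ?_ u v
  filter_upwards [hξ.eventually (by simp), hconf.eventually_nhds] with y hy hy'
  ext w
  simp [beta_apply, B.bracket_bracket_fderiv hss (hy.differentiableAt two_ne_zero) hy', smul_add]

lemma fderiv_betaHat_apply_sub_swap (hss : B.IsSemisimple) {ξ : E → L} {x : E}
    (hξ : ContDiffAt ℝ 2 ξ x) (hconf : ∀ᶠ y in 𝓝 x, B.ad (ξ y) ^ 3 = B.ad (ξ y)) (u v : E) :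
    fderiv ℝ (fun y => B.betaHat ξ y) x u v - fderiv ℝ (fun y => B.betaHat ξ y) x v u =
      B.bracket (fderiv ℝ ξ x u) (fderiv ℝ ξ x v) := by
  refine B.fderiv_apply_sub_swap_of_eventuallyEq hξ (-2⁻¹) ?_ u v
  filter_upwards [hξ.eventually (by simp), hconf.eventually_nhds] with y hy hy'
  ext w
  simp [betaHat_apply, B.bracket_bracket_fderiv hss (hy.differentiableAt two_ne_zero) hy']
  module

def IsCurvedFlatOn (U : Set E) (ξ : E → L) : Prop :=
  ∀ x ∈ U, ∀ u v : E,
    B.bracket (-(B.beta ξ x u) - B.betaHat ξ x u) (-(B.beta ξ x v) - B.betaHat ξ x v) = 0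

variable {U : Set E} {ξ : E → L}

lemma isCurvedFlatOn_iff (hss : B.IsSemisimple) (hU : IsOpen U) (hξ : DifferentiableOn ℝ ξ U)
    (hconf : ∀ y ∈ U, B.ad (ξ y) ^ 3 = B.ad (ξ y)) :
    B.IsCurvedFlatOn U ξ ↔ ∀ x ∈ U, ∀ u v : E, B.bracket (fderiv ℝ ξ x u) (fderiv ℝ ξ x v) = 0 :=
  forall₂_congr fun x hx => forall₂_congr fun u v => by
    rw [B.bracket_neg_beta_sub_betaHat hss (hξ.differentiableAt (hU.mem_nhds hx))
      (eventually_of_mem (hU.mem_nhds hx) hconf), neg_eq_zero]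

lemma isClosedFormOn_beta_iff (hss : B.IsSemisimple) (hU : IsOpen U) (hξ : ContDiffOn ℝ 2 ξ U)
    (hconf : ∀ y ∈ U, B.ad (ξ y) ^ 3 = B.ad (ξ y)) :
    IsClosedFormOn U (fun y => B.beta ξ y) ↔
      ∀ x ∈ U, ∀ u v : E, B.bracket (fderiv ℝ ξ x u) (fderiv ℝ ξ x v) = 0 :=
  forall₂_congr fun x hx => forall₂_congr fun u v => by
    rw [← sub_eq_zero, B.fderiv_beta_apply_sub_swap hss (hξ.contDiffAt (hU.mem_nhds hx))
      (eventually_of_mem (hU.mem_nhds hx) hconf)]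

lemma isClosedFormOn_betaHat_iff (hss : B.IsSemisimple) (hU : IsOpen U)
    (hξ : ContDiffOn ℝ 2 ξ U) (hconf : ∀ y ∈ U, B.ad (ξ y) ^ 3 = B.ad (ξ y)) :
    IsClosedFormOn U (fun y => B.betaHat ξ y) ↔
      ∀ x ∈ U, ∀ u v : E, B.bracket (fderiv ℝ ξ x u) (fderiv ℝ ξ x v) = 0 :=
  forall₂_congr fun x hx => forall₂_congr fun u v => by
    rw [← sub_eq_zero, B.fderiv_betaHat_apply_sub_swap hss (hξ.contDiffAt (hU.mem_nhds hx))
      (eventually_of_mem (hU.mem_nhds hx) hconf)]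

lemma fderiv_add_bracket_betaHat_mem (hss : B.IsSemisimple) (hU : IsOpen U)
    (hξ : DifferentiableOn ℝ ξ U) (hconf : ∀ y ∈ U, B.ad (ξ y) ^ 3 = B.ad (ξ y)) {ψ : E → L}
    (hψ : DifferentiableOn ℝ ψ U) (hψf : ∀ y ∈ U, ψ y ∈ B.eigSp (ξ y) 0 ⊔ B.eigSp (ξ y) 1)
    {x : E} (hx : x ∈ U) (u : E) :
    fderiv ℝ ψ x u + B.bracket (B.betaHat ξ x u) (ψ x) ∈ B.eigSp (ξ x) 0 ⊔ B.eigSp (ξ x) 1 := by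
  have hxU := hU.mem_nhds hx
  have hz := hconf x hx
  have hd := (hξ.differentiableAt hxU).hasFDerivAt
  have hψx := (hψ.differentiableAt hxU).hasFDerivAt
  refine B.add_bracket_mem_eigSp_zero_sup_one hz (B.beta_mem_eigSp_one hz u)
    (B.betaHat_mem_eigSp_neg_one hz u) (hψf x hx) ?_
  rw [← B.fderiv_eq_beta_sub_betaHat hss hd.differentiableAt (eventually_of_mem hxU hconf)]
  have h := (B.hasFDerivAt_bracket hd (B.hasFDerivAt_bracket hd hψx)).sub
    (B.hasFDerivAt_bracket hd hψx)
  have h0 := h.unique ((hasFDerivAt_const 0 x).congr_of_eventuallyEq <|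
    eventually_of_mem hxU fun y hy => sub_eq_zero.2 ((B.mem_eigSp_zero_sup_one_iff).1 (hψf y hy)))
  have hu := DFunLike.congr_fun h0 u
  simp only [ContinuousLinearMap.comp_add, sub_apply, add_apply, ContinuousLinearMap.comp_apply,
    bracketL_apply, ContinuousLinearMap.flip_apply, zero_apply] at hu
  rw [← sub_eq_zero, ← hu]
  abel

lemma fderiv_add_bracket_beta_mem (hss : B.IsSemisimple) (hU : IsOpen U)
    (hξ : DifferentiableOn ℝ ξ U) (hconf : ∀ y ∈ U, B.ad (ξ y) ^ 3 = B.ad (ξ y)) {ψ : E → L}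
    (hψ : DifferentiableOn ℝ ψ U) (hψf : ∀ y ∈ U, ψ y ∈ B.eigSp (ξ y) (-1) ⊔ B.eigSp (ξ y) 0)
    {x : E} (hx : x ∈ U) (u : E) :
    fderiv ℝ ψ x u + B.bracket (B.beta ξ x u) (ψ x) ∈ B.eigSp (ξ x) (-1) ⊔ B.eigSp (ξ x) 0 := by
  have h := B.fderiv_add_bracket_betaHat_mem hss (ξ := -ξ) hU hξ.neg
    (fun y hy => B.ad_neg_pow_three (hconf y hy)) hψ
    (fun y hy => by rw [Pi.neg_apply, eigSp_neg, eigSp_neg, neg_zero, sup_comm]; exact hψf y hy)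
    hx u
  rwa [betaHat_neg, Pi.neg_apply, eigSp_neg, eigSp_neg, neg_zero, sup_comm] at h

end LieStructure

theorem curved_flat_iff_darboux_pair_general
    {L : Type*} [NormedAddCommGroup L] [NormedSpace ℝ L] [FiniteDimensional ℝ L]
    (B : LieStructure L) (hss : B.IsSemisimple)
    {E : Type*} [NormedAddCommGroup E] [NormedSpace ℝ E]
    (U : Set E) (hU : IsOpen U)
    (ξ : E → L) (hξ : ContDiffOn ℝ (⊤ : ℕ∞) ξ U)
    (hconf : ∀ x ∈ U, (B.ad (ξ x)) ^ 3 = B.ad (ξ x)) :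
    -- (i) ↔ (ii)
    ((∀ x ∈ U, ∀ u v : E,
        B.bracket (-(B.beta ξ x u) - B.betaHat ξ x u)
          (-(B.beta ξ x v) - B.betaHat ξ x v) = 0) ↔
      (∀ x ∈ U, ∀ u v : E,
        fderiv ℝ (fun y => B.beta ξ y) x u v = fderiv ℝ (fun y => B.beta ξ y) x v u)) ∧
    -- (ii) ↔ (iii)
    ((∀ x ∈ U, ∀ u v : E,
        fderiv ℝ (fun y => B.beta ξ y) x u v = fderiv ℝ (fun y => B.beta ξ y) x v u) ↔
      (∀ x ∈ U, ∀ u v : E,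
        fderiv ℝ (fun y => B.betaHat ξ y) x u v =
        fderiv ℝ (fun y => B.betaHat ξ y) x v u)) ∧
    -- when these hold, `(f, β̂/m)` and `(f̂, β/m)` form a Darboux pair
    ((∀ x ∈ U, ∀ u v : E,
        B.bracket (-(B.beta ξ x u) - B.betaHat ξ x u)
          (-(B.beta ξ x v) - B.betaHat ξ x v) = 0) →
      ∀ m : ℝ, m ≠ 0 →
        -- `(f, β̂/m)` is isothermic: `β̂/m` is closed and valued in `f^⊥ = 𝔤₋₁`
        (∀ x ∈ U, ∀ u : E, m⁻¹ • B.betaHat ξ x u ∈ B.eigSp (ξ x) (-1)) ∧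
        (∀ x ∈ U, ∀ u v : E,
          fderiv ℝ (fun y => m⁻¹ • B.betaHat ξ y) x u v =
          fderiv ℝ (fun y => m⁻¹ • B.betaHat ξ y) x v u) ∧
        -- `(f̂, β/m)` is isothermic: `β/m` is closed and valued in `f̂^⊥ = 𝔤₁`
        (∀ x ∈ U, ∀ u : E, m⁻¹ • B.beta ξ x u ∈ B.eigSp (ξ x) 1) ∧
        (∀ x ∈ U, ∀ u v : E,
          fderiv ℝ (fun y => m⁻¹ • B.beta ξ y) x u v =
          fderiv ℝ (fun y => m⁻¹ • B.beta ξ y) x v u) ∧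
        -- `f̂` is parallel for `d + m·(β̂/m)`: `f̂ = 𝒟_m f`
        (∀ ψ : E → L, ContDiffOn ℝ (⊤ : ℕ∞) ψ U →
          (∀ x ∈ U, ψ x ∈ B.eigSp (ξ x) 0 ⊔ B.eigSp (ξ x) 1) →
          ∀ x ∈ U, ∀ u : E,
            fderiv ℝ ψ x u + m • B.bracket (m⁻¹ • B.betaHat ξ x u) (ψ x) ∈
              B.eigSp (ξ x) 0 ⊔ B.eigSp (ξ x) 1) ∧
        -- `f` is parallel for `d + m·(β/m)`: `f = 𝒟_m f̂`
        (∀ ψ : E → L, ContDiffOn ℝ (⊤ : ℕ∞) ψ U →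
          (∀ x ∈ U, ψ x ∈ B.eigSp (ξ x) (-1) ⊔ B.eigSp (ξ x) 0) →
          ∀ x ∈ U, ∀ u : E,
            fderiv ℝ ψ x u + m • B.bracket (m⁻¹ • B.beta ξ x u) (ψ x) ∈
              B.eigSp (ξ x) (-1) ⊔ B.eigSp (ξ x) 0)) := by
  have hξ₂ : ContDiffOn ℝ 2 ξ U := hξ.of_le (WithTop.coe_le_coe.2 le_top)
  have hdiff := hξ₂.differentiableOn two_ne_zero
  have hβ := (B.isCurvedFlatOn_iff hss hU hdiff hconf).trans
    (B.isClosedFormOn_beta_iff hss hU hξ₂ hconf).symm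
  have hβ' := (B.isClosedFormOn_beta_iff hss hU hξ₂ hconf).trans
    (B.isClosedFormOn_betaHat_iff hss hU hξ₂ hconf).symm
  refine ⟨hβ, hβ', fun hN m hm => ?_⟩
  have hcancel : ∀ a b : L, m • B.bracket (m⁻¹ • a) b = B.bracket a b := fun a b => by
    rw [map_smul, LinearMap.smul_apply, smul_smul, mul_inv_cancel₀ hm, one_smul]
  refine ⟨fun x hx u => Submodule.smul_mem _ _ (B.betaHat_mem_eigSp_neg_one (hconf x hx) u),
    (hβ'.1 (hβ.1 hN)).const_smul m⁻¹,
    fun x hx u => Submodule.smul_mem _ _ (B.beta_mem_eigSp_one (hconf x hx) u),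
    (hβ.1 hN).const_smul m⁻¹,
    fun ψ hψ hψf x hx u => ?_, fun ψ hψ hψf x hx u => ?_⟩ <;> rw [hcancel]
  · exact B.fderiv_add_bracket_betaHat_mem hss hU hdiff hconf
      (hψ.differentiableOn (by simp)) hψf hx u
  · exact B.fderiv_add_bracket_beta_mem hss hU hdiff hconf
      (hψ.differentiableOn (by simp)) hψf hx u

/-- **Curved flats in the space of complementary pairs are Darboux pairs.**
For `φ = (f, f̂)` encoded by a complementary-pair configuration `ξ`, with
`𝒩 = −β − β̂`: `φ` is a curved flat (`⁅𝒩 ∧ 𝒩⁆ = 0`) iff `β` is closed iff `β̂` is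
closed; and in that case, for every `m ≠ 0`, `(f, β̂/m)` and `(f̂, β/m)` are
isothermic maps, each a Darboux transform of the other with parameter `m`. -/
theorem curved_flat_iff_darboux_pair
    {L : Type*} [NormedAddCommGroup L] [NormedSpace ℝ L] [FiniteDimensional ℝ L]
    (B : LieStructure L) (hss : B.IsSemisimple)
    {E : Type*} [NormedAddCommGroup E] [NormedSpace ℝ E] [FiniteDimensional ℝ E]
    (U : Set E) (hU : IsOpen U) (hUconn : IsConnected U)
    (ξ : E → L) (hξ : ContDiffOn ℝ (⊤ : ℕ∞) ξ U)
    (hconf : ∀ x ∈ U, (B.ad (ξ x)) ^ 3 = B.ad (ξ x)) :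
    -- (i) ↔ (ii)
    ((∀ x ∈ U, ∀ u v : E,
        B.bracket (-(B.beta ξ x u) - B.betaHat ξ x u)
          (-(B.beta ξ x v) - B.betaHat ξ x v) = 0) ↔
      (∀ x ∈ U, ∀ u v : E,
        fderiv ℝ (fun y => B.beta ξ y) x u v = fderiv ℝ (fun y => B.beta ξ y) x v u)) ∧
    -- (ii) ↔ (iii)
    ((∀ x ∈ U, ∀ u v : E,
        fderiv ℝ (fun y => B.beta ξ y) x u v = fderiv ℝ (fun y => B.beta ξ y) x v u) ↔
      (∀ x ∈ U, ∀ u v : E,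
        fderiv ℝ (fun y => B.betaHat ξ y) x u v =
        fderiv ℝ (fun y => B.betaHat ξ y) x v u)) ∧
    -- when these hold, `(f, β̂/m)` and `(f̂, β/m)` form a Darboux pair
    ((∀ x ∈ U, ∀ u v : E,
        B.bracket (-(B.beta ξ x u) - B.betaHat ξ x u)
          (-(B.beta ξ x v) - B.betaHat ξ x v) = 0) →
      ∀ m : ℝ, m ≠ 0 →
        -- `(f, β̂/m)` is isothermic: `β̂/m` is closed and valued in `f^⊥ = 𝔤₋₁`
        (∀ x ∈ U, ∀ u : E, m⁻¹ • B.betaHat ξ x u ∈ B.eigSp (ξ x) (-1)) ∧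
        (∀ x ∈ U, ∀ u v : E,
          fderiv ℝ (fun y => m⁻¹ • B.betaHat ξ y) x u v =
          fderiv ℝ (fun y => m⁻¹ • B.betaHat ξ y) x v u) ∧
        -- `(f̂, β/m)` is isothermic: `β/m` is closed and valued in `f̂^⊥ = 𝔤₁`
        (∀ x ∈ U, ∀ u : E, m⁻¹ • B.beta ξ x u ∈ B.eigSp (ξ x) 1) ∧
        (∀ x ∈ U, ∀ u v : E,
          fderiv ℝ (fun y => m⁻¹ • B.beta ξ y) x u v =
          fderiv ℝ (fun y => m⁻¹ • B.beta ξ y) x v u) ∧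
        -- `f̂` is parallel for `d + m·(β̂/m)`: `f̂ = 𝒟_m f`
        (∀ ψ : E → L, ContDiffOn ℝ (⊤ : ℕ∞) ψ U →
          (∀ x ∈ U, ψ x ∈ B.eigSp (ξ x) 0 ⊔ B.eigSp (ξ x) 1) →
          ∀ x ∈ U, ∀ u : E,
            fderiv ℝ ψ x u + m • B.bracket (m⁻¹ • B.betaHat ξ x u) (ψ x) ∈
              B.eigSp (ξ x) 0 ⊔ B.eigSp (ξ x) 1) ∧
        -- `f` is parallel for `d + m·(β/m)`: `f = 𝒟_m f̂`
        (∀ ψ : E → L, ContDiffOn ℝ (⊤ : ℕ∞) ψ U →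
          (∀ x ∈ U, ψ x ∈ B.eigSp (ξ x) (-1) ⊔ B.eigSp (ξ x) 0) →
          ∀ x ∈ U, ∀ u : E,
            fderiv ℝ ψ x u + m • B.bracket (m⁻¹ • B.beta ξ x u) (ψ x) ∈
              B.eigSp (ξ x) (-1) ⊔ B.eigSp (ξ x) 0)) :=
  curved_flat_iff_darboux_pair_general B hss U hU ξ hξ hconf
end
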